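/- Let σ > 0, R ≥ 0, C ∈ [0,1], and let g : [0,1] → [0,1] be measurable with ∫₀¹ g(y) dy = C. Then ∫₀¹ g(y) · exp((R/σ)·Φ⁻¹(y) − R²/(2σ²)) dy ≥ ∫₀^C exp((R/σ)·Φ⁻¹(y) − R²/(2σ²)) dy = Φ(Φ⁻¹(C) − R/σ), with equality when g is the indicator function of [0, C]. -/

import Mathlib

open MeasureTheory ProbabilityTheory Real

noncomputable section

/-- The standard normal cumulative distribution function Φ. -/
def Phi (x : ℝ) : ℝ := ((gaussianReal 0 1) (Set.Iic x)).toReal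

/-- The inverse Φ⁻¹ of the standard normal CDF (meaningful on (0,1)). -/
def PhiInv : ℝ → ℝ := Function.invFun Phi

/-- The standard normal probability density function Φ'. -/
def stdPdf (x : ℝ) : ℝ := Real.exp (-x ^ 2 / 2) / Real.sqrt (2 * Real.pi)

/-- `Φ(Φ⁻¹(y) - c)` with the conventions `Φ⁻¹(0) = -∞`, `Φ⁻¹(1) = +∞`,
`Φ(-∞ - c) = 0`, `Φ(+∞ - c) = 1`. -/
def PhiShift (c y : ℝ) : ℝ := if y ≤ 0 then 0 else if 1 ≤ y then 1 else Phi (PhiInv y - c)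

/-- `Φ'(Φ⁻¹(y))` with the conventions `Φ⁻¹(0) = -∞`, `Φ⁻¹(1) = +∞`, `Φ'(±∞) = 0`. -/
def pdfAtQuantile (y : ℝ) : ℝ := if y ≤ 0 then 0 else if 1 ≤ y then 0 else stdPdf (PhiInv y)

/-- The isotropic Gaussian measure `N(0, σ²I_d)` on `ℝ^d`. -/
def gaussPi (σ : ℝ) (d : ℕ) : Measure (EuclideanSpace ℝ (Fin d)) :=
  Measure.map (MeasurableEquiv.toLp 2 (Fin d → ℝ))
    (Measure.pi fun _ : Fin d => gaussianReal 0 (Real.toNNReal (σ ^ 2)))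

/-- The Gaussian-smoothed function `p_a(x) = E_{ε ~ N(0,σ²I_d)}[f(x+ε)]`. -/
def smoothed (σ : ℝ) (d : ℕ) (f : EuclideanSpace ℝ (Fin d) → ℝ)
    (x : EuclideanSpace ℝ (Fin d)) : ℝ := ∫ ε, f (x + ε) ∂(gaussPi σ d)

/-- A centered real random variable `Z` is `(a,b)`-subexponential if `E[Z] = 0` and
`E[exp (l Z)] ≤ exp (a² l² / 2)` for all `|l| ≤ 1/b`. -/
def IsSubexponential {Ω : Type*} [MeasurableSpace Ω] (μ : Measure Ω) (Z : Ω → ℝ)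
    (a b : ℝ) : Prop :=
  (∫ ω, Z ω ∂μ) = 0 ∧
    ∀ l : ℝ, |l| ≤ 1 / b → (∫ ω, Real.exp (l * Z ω) ∂μ) ≤ Real.exp (a ^ 2 * l ^ 2 / 2)

/-! The substitution `y = Φ(x)` carries Lebesgue measure on `(0,1)` to the standard Gaussian and
the weight `exp (c Φ⁻¹(y) - c²/2)` to the likelihood ratio of `N(c,1)` against `N(0,1)`; hence
`∫₀^C` of the weight is the `N(c,1)`-mass of `(-∞, Φ⁻¹(C)]`, i.e. `Φ(Φ⁻¹(C) - c)`.

The inequality is the bathtub principle. The weight `w` is increasing for `c ≥ 0`, so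
`(g - 1_{[0,C]}) (w - w(C)) ≥ 0` pointwise, and integrating against `∫ g = C = ∫ 1_{[0,C]}` gives
`∫ g w ≥ ∫₀^C w`. For `C ∈ {0, 1}` no threshold works (`w` is unbounded at both ends), but then the
constraint forces `g = 1_{[0,C]}` almost everywhere. -/

open Set Filter

lemma gaussianPDFReal_zero_one : gaussianPDFReal 0 1 = stdPdf := by
  ext x; simp [gaussianPDFReal, stdPdf, div_eq_inv_mul]

lemma stdPdf_pos (x : ℝ) : 0 < stdPdf x :=
  gaussianPDFReal_zero_one ▸ gaussianPDFReal_pos 0 1 x one_ne_zero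

lemma continuous_stdPdf : Continuous stdPdf := by
  unfold stdPdf; fun_prop

lemma integrable_stdPdf : Integrable stdPdf :=
  gaussianPDFReal_zero_one ▸ integrable_gaussianPDFReal 0 1

lemma integral_stdPdf : ∫ x, stdPdf x = 1 :=
  gaussianPDFReal_zero_one ▸ integral_gaussianPDFReal_eq_one 0 one_ne_zero

lemma stdPdf_mul_exp (c x : ℝ) : stdPdf x * exp (c * x - c ^ 2 / 2) = stdPdf (x - c) := by
  unfold stdPdf
  rw [div_mul_eq_mul_div, ← exp_add]
  ring_nf

lemma Phi_eq_cdf : Phi = cdf (gaussianReal 0 1) := by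
  ext x; rw [cdf_eq_real]; rfl

lemma Phi_eq_setIntegral (x : ℝ) : Phi x = ∫ u in Iic x, stdPdf u := by
  rw [Phi, gaussianReal_apply_eq_integral 0 one_ne_zero, gaussianPDFReal_zero_one,
    ENNReal.toReal_ofReal (setIntegral_nonneg measurableSet_Iic fun u _ => (stdPdf_pos u).le)]

lemma Phi_sub_Phi (a b : ℝ) : Phi b - Phi a = ∫ u in a..b, stdPdf u := by
  rw [Phi_eq_setIntegral, Phi_eq_setIntegral, ← intervalIntegral.integral_Iic_sub_Iic
    integrable_stdPdf.integrableOn integrable_stdPdf.integrableOn]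

lemma hasDerivAt_Phi (x : ℝ) : HasDerivAt Phi (stdPdf x) x := by
  have hPhi : Phi = fun y => Phi 0 + ∫ u in (0 : ℝ)..y, stdPdf u := by
    ext y; rw [← Phi_sub_Phi]; ring
  rw [hPhi]
  exact (intervalIntegral.integral_hasDerivAt_right integrable_stdPdf.intervalIntegrable
    (continuous_stdPdf.stronglyMeasurableAtFilter _ _) continuous_stdPdf.continuousAt).const_add _

lemma continuous_Phi : Continuous Phi :=
  continuous_iff_continuousAt.2 fun x => (hasDerivAt_Phi x).continuousAt

lemma strictMono_Phi : StrictMono Phi :=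
  strictMono_of_hasDerivAt_pos hasDerivAt_Phi stdPdf_pos

lemma Phi_mem_Ioo (x : ℝ) : Phi x ∈ Ioo 0 1 := by
  have hmono : StrictMono (cdf (gaussianReal 0 1)) := Phi_eq_cdf ▸ strictMono_Phi
  rw [Phi_eq_cdf]
  exact ⟨(cdf_nonneg _ (x - 1)).trans_lt (hmono (sub_one_lt x)),
    (hmono (lt_add_one x)).trans_le (cdf_le_one _ _)⟩

lemma range_Phi : range Phi = Ioo 0 1 := by
  refine Subset.antisymm (range_subset_iff.2 Phi_mem_Ioo) fun y hy => ?_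
  have hcont : Continuous (cdf (gaussianReal 0 1)) := Phi_eq_cdf ▸ continuous_Phi
  rw [Phi_eq_cdf]
  exact mem_range_of_exists_le_of_exists_ge hcont
    ((tendsto_cdf_atBot _).eventually (eventually_le_nhds hy.1)).exists
    ((tendsto_cdf_atTop _).eventually (eventually_ge_nhds hy.2)).exists

lemma Phi_PhiInv {y : ℝ} (hy : y ∈ Ioo 0 1) : Phi (PhiInv y) = y :=
  Function.invFun_eq (range_Phi ▸ hy : y ∈ range Phi)

lemma PhiInv_Phi (x : ℝ) : PhiInv (Phi x) = x :=
  Function.leftInverse_invFun strictMono_Phi.injective x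

lemma image_Phi_Iic (t : ℝ) : Phi '' Iic t = Ioc 0 (Phi t) := by
  ext y
  constructor
  · rintro ⟨x, hx, rfl⟩
    exact ⟨(Phi_mem_Ioo x).1, strictMono_Phi.monotone hx⟩
  · rintro ⟨h0, h1⟩
    have hy : y ∈ Ioo 0 1 := ⟨h0, h1.trans_lt (Phi_mem_Ioo t).2⟩
    exact ⟨PhiInv y, strictMono_Phi.le_iff_le.1 (by rwa [Phi_PhiInv hy]), Phi_PhiInv hy⟩

lemma monotoneOn_PhiInv : MonotoneOn PhiInv (Ioo 0 1) := fun a ha b hb hab =>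
  strictMono_Phi.le_iff_le.1 (by rwa [Phi_PhiInv ha, Phi_PhiInv hb])

def tiltWeight (c y : ℝ) : ℝ := exp (c * PhiInv y - c ^ 2 / 2)

lemma monotoneOn_tiltWeight {c : ℝ} (hc : 0 ≤ c) : MonotoneOn (tiltWeight c) (Ioo 0 1) :=
  fun _ ha _ hb hab => exp_le_exp.2 <| sub_le_sub_right
    (mul_le_mul_of_nonneg_left (monotoneOn_PhiInv ha hb hab) hc) _

lemma abs_deriv_Phi_smul_tiltWeight (c x : ℝ) :
    |stdPdf x| • tiltWeight c (Phi x) = stdPdf (x - c) := by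
  rw [tiltWeight, PhiInv_Phi, smul_eq_mul, abs_of_pos (stdPdf_pos x), stdPdf_mul_exp]

lemma setIntegral_image_Phi_tiltWeight (c : ℝ) {s : Set ℝ} (hs : MeasurableSet s) :
    ∫ y in Phi '' s, tiltWeight c y = ∫ x in s, stdPdf (x - c) := by
  simp_rw [integral_image_eq_integral_abs_deriv_smul hs
    (fun x _ => (hasDerivAt_Phi x).hasDerivWithinAt) strictMono_Phi.injective.injOn,
    abs_deriv_Phi_smul_tiltWeight]

lemma integrableOn_tiltWeight (c : ℝ) : IntegrableOn (tiltWeight c) (Ioo 0 1) := by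
  rw [← range_Phi, ← image_univ, integrableOn_image_iff_integrableOn_abs_deriv_smul
    MeasurableSet.univ (fun x _ => (hasDerivAt_Phi x).hasDerivWithinAt)
    strictMono_Phi.injective.injOn]
  simp_rw [abs_deriv_Phi_smul_tiltWeight]
  exact (integrable_stdPdf.comp_sub_right c).integrableOn

lemma setIntegral_Ioo_tiltWeight (c : ℝ) : ∫ y in Ioo 0 1, tiltWeight c y = 1 := by
  rw [← range_Phi, ← image_univ, setIntegral_image_Phi_tiltWeight c MeasurableSet.univ,
    setIntegral_univ, integral_sub_right_eq_self stdPdf c, integral_stdPdf]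

lemma setIntegral_Ioc_tiltWeight (c : ℝ) {C : ℝ} (hC : C ∈ Ioo 0 1) :
    ∫ y in Ioc 0 C, tiltWeight c y = Phi (PhiInv C - c) := by
  rw [← Phi_PhiInv hC, ← image_Phi_Iic, setIntegral_image_Phi_tiltWeight c measurableSet_Iic,
    PhiInv_Phi, Phi_eq_setIntegral, ← integral_indicator measurableSet_Iic,
    ← integral_indicator measurableSet_Iic]
  conv_rhs => rw [← integral_sub_right_eq_self _ c]
  congr 1 with x
  simp only [indicator_apply, mem_Iic, sub_le_sub_iff_right]

lemma integral_tiltWeight_eq_PhiShift (c : ℝ) {C : ℝ} (hC : C ∈ Icc 0 1) :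
    ∫ y in (0 : ℝ)..C, tiltWeight c y = PhiShift c C := by
  rcases hC.1.eq_or_lt with rfl | hC0
  · simp [PhiShift]
  rcases hC.2.eq_or_lt with rfl | hC1
  · rw [intervalIntegral.integral_of_le zero_le_one, integral_Ioc_eq_integral_Ioo,
      setIntegral_Ioo_tiltWeight]
    simp [PhiShift]
  · rw [intervalIntegral.integral_of_le hC.1, setIntegral_Ioc_tiltWeight c ⟨hC0, hC1⟩,
      PhiShift, if_neg hC0.not_ge, if_neg hC1.not_ge]

theorem integral_mul_le_integral_mul_of_sub_mul_sub_nonneg {α : Type*} [MeasurableSpace α]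
    {μ : Measure α} {f g w : α → ℝ} (K : ℝ) (hf : Integrable f μ) (hg : Integrable g μ)
    (hfw : Integrable (fun x => f x * w x) μ) (hgw : Integrable (fun x => g x * w x) μ)
    (hfg : ∫ x, f x ∂μ = ∫ x, g x ∂μ) (hsign : ∀ᵐ x ∂μ, 0 ≤ (g x - f x) * (w x - K)) :
    ∫ x, f x * w x ∂μ ≤ ∫ x, g x * w x ∂μ := by
  have hexpand : ∫ x, (g x - f x) * (w x - K) ∂μ
      = (∫ x, g x * w x ∂μ - ∫ x, f x * w x ∂μ) - K * (∫ x, g x ∂μ - ∫ x, f x ∂μ) := by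
    simp_rw [show ∀ x, (g x - f x) * (w x - K) = (g x * w x - f x * w x) - K * (g x - f x)
      from fun x => by ring]
    have hdiff : Integrable (fun x => g x * w x - f x * w x) μ := hgw.sub hfw
    have hlin : Integrable (fun x => K * (g x - f x)) μ := (hg.sub hf).const_mul K
    rw [integral_sub hdiff hlin, integral_sub hgw hfw,
      integral_const_mul, integral_sub hg hf]
  have hnonneg := integral_nonneg_of_ae hsign
  rw [hexpand, hfg, sub_self, mul_zero, sub_zero, sub_nonneg] at hnonneg
  exact hnonneg

lemma integral_indicator_Icc_mul {a b C : ℝ} (hC : C ∈ Icc a b) (w : ℝ → ℝ) :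
    ∫ y in a..b, (Icc a C).indicator 1 y * w y = ∫ y in a..C, w y := by
  simp_rw [← indicator_mul_left, Pi.one_apply, one_mul]
  rw [intervalIntegral.integral_of_le (hC.1.trans hC.2), intervalIntegral.integral_of_le hC.1,
    setIntegral_indicator measurableSet_Icc]
  congr 2
  ext y
  simp only [mem_inter_iff, mem_Ioc, mem_Icc]
  exact ⟨fun h => ⟨h.1.1, h.2.2⟩, fun h => ⟨⟨h.1, h.2.trans hC.2⟩, h.1.le, h.2⟩⟩

lemma sub_indicator_mul_sub_nonneg {a b C y t : ℝ} {w : ℝ → ℝ} (hw : MonotoneOn w (Ioo a b))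
    (hC : C ∈ Ioo a b) (hy : y ∈ Ioo a b) (ht : t ∈ Icc 0 1) :
    0 ≤ (t - (Icc a C).indicator 1 y) * (w y - w C) := by
  rcases le_or_gt y C with hyC | hCy
  · rw [indicator_of_mem (show y ∈ Icc a C from ⟨hy.1.le, hyC⟩), Pi.one_apply]
    exact mul_nonneg_of_nonpos_of_nonpos (sub_nonpos.2 ht.2) (sub_nonpos.2 (hw hy hC hyC))
  · rw [indicator_of_notMem fun h => hCy.not_ge h.2, sub_zero]
    exact mul_nonneg ht.1 (sub_nonneg.2 (hw hC hy hCy.le))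

lemma integral_mul_eq_of_ae_le_of_integral_eq {α : Type*} [MeasurableSpace α] {μ : Measure α}
    {f g w : α → ℝ} (hf : Integrable f μ) (hg : Integrable g μ) (hfg : f ≤ᵐ[μ] g)
    (hint : ∫ x, f x ∂μ = ∫ x, g x ∂μ) : ∫ x, f x * w x ∂μ = ∫ x, g x * w x ∂μ :=
  integral_congr_ae (((integral_eq_iff_of_ae_le hf hg hfg).1 hint).mul EventuallyEq.rfl)

lemma norm_le_one_of_mem_Icc {t : ℝ} (ht : t ∈ Icc 0 1) : ‖t‖ ≤ 1 := by
  rw [Real.norm_of_nonneg ht.1]; exact ht.2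

theorem integral_le_integral_mul_of_monotoneOn {a b C : ℝ} {g w : ℝ → ℝ} (hC : C ∈ Icc a b)
    (hw : MonotoneOn w (Ioo a b)) (hwi : IntegrableOn w (Ioo a b))
    (hg : AEStronglyMeasurable g (volume.restrict (Ioo a b)))
    (hg01 : ∀ y ∈ Ioo a b, g y ∈ Icc 0 1) (hint : ∫ y in a..b, g y = C - a) :
    ∫ y in a..C, w y ≤ ∫ y in a..b, g y * w y := by
  set ind : ℝ → ℝ := (Icc a C).indicator 1
  have hab : a ≤ b := hC.1.trans hC.2
  have hind_int : ∫ y in Ioo a b, ind y = ∫ y in Ioo a b, g y := by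
    rw [← integral_Ioc_eq_integral_Ioo, ← integral_Ioc_eq_integral_Ioo,
      ← intervalIntegral.integral_of_le hab, ← intervalIntegral.integral_of_le hab, hint]
    simpa using integral_indicator_Icc_mul hC 1
  rw [← integral_indicator_Icc_mul hC, intervalIntegral.integral_of_le hab,
    intervalIntegral.integral_of_le hab, integral_Ioc_eq_integral_Ioo,
    integral_Ioc_eq_integral_Ioo]
  have hind01 (y : ℝ) : ind y ∈ Icc 0 1 := by
    by_cases hy : y ∈ Icc a C <;> simp [ind, hy]
  have hg_bound : ∀ᵐ y ∂volume.restrict (Ioo a b), ‖g y‖ ≤ 1 :=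
    ae_restrict_of_forall_mem measurableSet_Ioo fun y hy => norm_le_one_of_mem_Icc (hg01 y hy)
  have hind_bound : ∀ᵐ y ∂volume.restrict (Ioo a b), ‖ind y‖ ≤ 1 :=
    ae_of_all _ fun y => norm_le_one_of_mem_Icc (hind01 y)
  have hind_meas : AEStronglyMeasurable ind (volume.restrict (Ioo a b)) :=
    (measurable_one.indicator measurableSet_Icc).aestronglyMeasurable
  have hgi : IntegrableOn g (Ioo a b) := IntegrableOn.of_bound measure_Ioo_lt_top hg 1 hg_bound
  have hindi : IntegrableOn ind (Ioo a b) :=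
    IntegrableOn.of_bound measure_Ioo_lt_top hind_meas 1 hind_bound
  have hgw := hwi.bdd_mul hg hg_bound
  have hindw := hwi.bdd_mul hind_meas hind_bound
  rcases hC.1.eq_or_lt with rfl | hCa
  · refine (integral_mul_eq_of_ae_le_of_integral_eq hindi hgi
      (ae_restrict_of_forall_mem measurableSet_Ioo fun y hy => ?_) hind_int).le
    rw [show ind y = 0 from indicator_of_notMem (fun h => hy.1.not_ge h.2) _]
    exact (hg01 y hy).1
  rcases hC.2.eq_or_lt with rfl | hCb
  · refine (integral_mul_eq_of_ae_le_of_integral_eq hgi hindi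
      (ae_restrict_of_forall_mem measurableSet_Ioo fun y hy => ?_) hind_int.symm).ge
    rw [show ind y = 1 from indicator_of_mem (Ioo_subset_Icc_self hy) _]
    exact (hg01 y hy).2
  exact integral_mul_le_integral_mul_of_sub_mul_sub_nonneg (w C) hindi hgi hindw hgw hind_int
    (ae_restrict_of_forall_mem measurableSet_Ioo fun y hy =>
      sub_indicator_mul_sub_nonneg hw ⟨hCa, hCb⟩ hy (hg01 y hy))

/-- one-constraint minimization: for measurable `g : [0,1] → [0,1]` with
`∫₀¹ g = C`, `∫₀¹ g(y) exp((R/σ)Φ⁻¹(y) - R²/(2σ²)) dy ≥ ∫₀^C exp((R/σ)Φ⁻¹(y) - R²/(2σ²)) dy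
= Φ(Φ⁻¹(C) - R/σ)`, with equality when `g` is the indicator of `[0, C]`. -/
theorem weighted_integral_min_one_constraint (σ R C : ℝ) (hσ : 0 < σ) (hR : 0 ≤ R)
    (hC : C ∈ Set.Icc (0 : ℝ) 1)
    (g : ℝ → ℝ) (hg : Measurable g) (hg01 : ∀ y ∈ Set.Icc (0 : ℝ) 1, g y ∈ Set.Icc (0 : ℝ) 1)
    (hint : (∫ y in (0 : ℝ)..1, g y) = C) :
    ((∫ y in (0 : ℝ)..1, g y * Real.exp ((R / σ) * PhiInv y - R ^ 2 / (2 * σ ^ 2))) ≥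
      ∫ y in (0 : ℝ)..C, Real.exp ((R / σ) * PhiInv y - R ^ 2 / (2 * σ ^ 2))) ∧
    ((∫ y in (0 : ℝ)..C, Real.exp ((R / σ) * PhiInv y - R ^ 2 / (2 * σ ^ 2))) =
      PhiShift (R / σ) C) ∧
    ((∀ y ∈ Set.Icc (0 : ℝ) 1,
        g y = Set.indicator (Set.Icc (0 : ℝ) C) (fun _ => (1 : ℝ)) y) →
      (∫ y in (0 : ℝ)..1, g y * Real.exp ((R / σ) * PhiInv y - R ^ 2 / (2 * σ ^ 2))) =
        PhiShift (R / σ) C) := by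
  have hweight (y : ℝ) :
      exp (R / σ * PhiInv y - R ^ 2 / (2 * σ ^ 2)) = tiltWeight (R / σ) y := by
    rw [tiltWeight]; ring_nf
  simp only [hweight]
  have hPhiShift := integral_tiltWeight_eq_PhiShift (R / σ) hC
  refine ⟨?_, hPhiShift, fun hind => ?_⟩
  · exact integral_le_integral_mul_of_monotoneOn hC (monotoneOn_tiltWeight (div_nonneg hR hσ.le))
      (integrableOn_tiltWeight _) hg.aestronglyMeasurable
      (fun y hy => hg01 y (Ioo_subset_Icc_self hy)) (by rw [hint, sub_zero])
  · rw [← hPhiShift, ← integral_indicator_Icc_mul hC]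
    refine intervalIntegral.integral_congr fun y hy => ?_
    rw [hind y (uIcc_of_le (zero_le_one (α := ℝ)) ▸ hy)]
    rfl
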